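/- For every z ∈ ℝ the following factorizations hold (⊗ the Kronecker product): 𝒜(z) = (Ũ_μ(z) ⊗ I_q) · 𝒜(0) · (W̃_ν(z) ⊗ I_r); 𝓜(z) = (I_μ ⊗ Ũ_q(z)) · 𝓜(0) · (I_ν ⊗ W̃_r(z)); and 𝓝(z) = (I_μ ⊗ Ũ_q(z)) · 𝓝(0) · (I_ν ⊗ W̃_r(z)). -/

import Mathlib

open Matrix Kronecker

noncomputable section

/-- The `k × k` shift matrix with `(i,j)` entry `δ_{i+1,j}`. -/
def Sh (k : ℕ) : Matrix (Fin k) (Fin k) ℝ :=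
  Matrix.of fun i j => if (i : ℕ) + 1 = (j : ℕ) then 1 else 0

/-- The matrix `A^k(z) ∈ ℝ^{q×r}`, with entries
`k!/(i!·j!·(k−i−j)!)·z^{k−i−j} = C(k,i)·C(k−i,j)·z^{k−i−j}` for `i+j ≤ k`, else `0`. -/
def Amat (q r k : ℕ) (z : ℝ) : Matrix (Fin q) (Fin r) ℝ :=
  Matrix.of fun i j =>
    if (i : ℕ) + (j : ℕ) ≤ k then
      (Nat.choose k i : ℝ) * (Nat.choose (k - i) j : ℝ) * z ^ (k - i - j)
    else 0

/-- The block matrix `𝒜(z) ∈ ℝ^{μq×νr}` with `(i,j)` block `A^{i+j}(z)`. -/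
def Acal (q r μ ν : ℕ) (z : ℝ) : Matrix (Fin μ × Fin q) (Fin ν × Fin r) ℝ :=
  Matrix.of fun p p' => Amat q r ((p.1 : ℕ) + (p'.1 : ℕ)) z p.2 p'.2

/-- `A^0 = e₀ f₀ᵀ ∈ ℝ^{q×r}`. -/
def A0 (q r : ℕ) : Matrix (Fin q) (Fin r) ℝ :=
  Matrix.of fun a b => if (a : ℕ) = 0 ∧ (b : ℕ) = 0 then 1 else 0

/-- The block matrix `Ā ∈ ℝ^{μq×νr}` with `(i,j)` block `(S_qᵀ)^j · A^0 · S_r^i`. -/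
def Abar (q r μ ν : ℕ) : Matrix (Fin μ × Fin q) (Fin ν × Fin r) ℝ :=
  Matrix.of fun p p' =>
    (((Sh q)ᵀ) ^ (p'.1 : ℕ) * A0 q r * (Sh r) ^ (p.1 : ℕ)) p.2 p'.2

/-- `J_k(z) = z·I_k + S_kᵀ`. -/
def Jmat (k : ℕ) (z : ℝ) : Matrix (Fin k) (Fin k) ℝ := z • 1 + (Sh k)ᵀ

/-- The block lower-triangular matrix `𝓛_{m,k}(z)` with `(i,j)` block `C(i,j)·J_k(z)^{i−j}`
for `i ≥ j` and `0` otherwise. -/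
def Lmat (m k : ℕ) (z : ℝ) : Matrix (Fin m × Fin k) (Fin m × Fin k) ℝ :=
  Matrix.of fun p p' =>
    if (p'.1 : ℕ) ≤ (p.1 : ℕ) then
      (Nat.choose p.1 p'.1 : ℝ) * ((Jmat k z) ^ ((p.1 : ℕ) - (p'.1 : ℕ))) p.2 p'.2
    else 0

/-- Natural (block row-major) identification of `Fin (m*n)` with `Fin m × Fin n`. -/
def bIdx (m n : ℕ) : Fin (m * n) → Fin m × Fin n := fun x => finProdFinEquiv.symm x

/-- `M^{(n)}(z) ∈ ℝ^{q×r}`, the `n`-th derivative of `M(z) = u(z)w(z)`,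
whose `(a,b)` entry is the `n`-th derivative of `z^{a+b}`. -/
def Md (q r n : ℕ) (z : ℝ) : Matrix (Fin q) (Fin r) ℝ :=
  Matrix.of fun a b => iteratedDeriv n (fun t : ℝ => t ^ ((a : ℕ) + (b : ℕ))) z

/-- The block matrix `𝓜(z) ∈ ℝ^{μq×νr}` with `(i,j)` block `M^{(i+j)}(z)`. -/
def Mcal (q r μ ν : ℕ) (z : ℝ) : Matrix (Fin μ × Fin q) (Fin ν × Fin r) ℝ :=
  Matrix.of fun p p' => Md q r ((p.1 : ℕ) + (p'.1 : ℕ)) z p.2 p'.2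

/-- The block matrix `𝓝(z) ∈ ℝ^{μq×νr}` with `(i,j)` block `M^{(i+j)}(z)/(i!·j!)`. -/
def Ncal (q r μ ν : ℕ) (z : ℝ) : Matrix (Fin μ × Fin q) (Fin ν × Fin r) ℝ :=
  Matrix.of fun p p' =>
    Md q r ((p.1 : ℕ) + (p'.1 : ℕ)) z p.2 p'.2 /
      ((Nat.factorial (p.1 : ℕ) : ℝ) * (Nat.factorial (p'.1 : ℕ) : ℝ))

/-- `𝓝^0(z) = (M(z)/0!, …, M^{(ν−1)}(z)/(ν−1)!) ∈ ℝ^{q×νr}`. -/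
def Ncal0 (q r ν : ℕ) (z : ℝ) : Matrix (Fin q) (Fin ν × Fin r) ℝ :=
  Matrix.of fun a p => Md q r (p.1 : ℕ) z a p.2 / (Nat.factorial (p.1 : ℕ) : ℝ)

/-- `𝓜^0(z) = (M(z), M'(z), …, M^{(ν−1)}(z)) ∈ ℝ^{q×νr}`. -/
def M0cal (q r ν : ℕ) (z : ℝ) : Matrix (Fin q) (Fin ν × Fin r) ℝ :=
  Matrix.of fun a p => Md q r (p.1 : ℕ) z a p.2

/-- `U_q(z)` with columns `u(z), u'(z), …, u^{(q−1)}(z)`, where `u_a(z) = z^a`. -/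
def Uq (q : ℕ) (z : ℝ) : Matrix (Fin q) (Fin q) ℝ :=
  Matrix.of fun a j => iteratedDeriv (j : ℕ) (fun t : ℝ => t ^ (a : ℕ)) z

/-- `W_r(z)` with rows `w(z), w'(z), …, w^{(r−1)}(z)`, where `w_b(z) = z^b`. -/
def Wrm (r : ℕ) (z : ℝ) : Matrix (Fin r) (Fin r) ℝ :=
  Matrix.of fun i b => iteratedDeriv (i : ℕ) (fun t : ℝ => t ^ (b : ℕ)) z

/-- `Ũ_m(z)` with entries `C(i,j)·z^{i−j}` for `i ≥ j` and `0` otherwise. -/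
def Ut (m : ℕ) (z : ℝ) : Matrix (Fin m) (Fin m) ℝ :=
  Matrix.of fun i j =>
    if (j : ℕ) ≤ (i : ℕ) then (Nat.choose i j : ℝ) * z ^ ((i : ℕ) - (j : ℕ)) else 0

/-- `W̃_m(z)` with entries `C(j,i)·z^{j−i}` for `j ≥ i` and `0` otherwise. -/
def Wt (m : ℕ) (z : ℝ) : Matrix (Fin m) (Fin m) ℝ :=
  Matrix.of fun i j =>
    if (i : ℕ) ≤ (j : ℕ) then (Nat.choose j i : ℝ) * z ^ ((j : ℕ) - (i : ℕ)) else 0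

/-- `D_m`, the diagonal matrix with `(i,i)` entry `i!`. -/
def Dm (m : ℕ) : Matrix (Fin m) (Fin m) ℝ :=
  Matrix.diagonal fun i => (Nat.factorial (i : ℕ) : ℝ)

/-- The block matrix `Â` whose `(i,j)` block has `(k,l)` entry `C(i+j,i)` if `k+l = i+j`, else 0. -/
def Ahat (q r μ ν : ℕ) : Matrix (Fin μ × Fin q) (Fin ν × Fin r) ℝ :=
  Matrix.of fun p p' =>
    if (p.2 : ℕ) + (p'.2 : ℕ) = (p.1 : ℕ) + (p'.1 : ℕ) then
      (Nat.choose ((p.1 : ℕ) + (p'.1 : ℕ)) (p.1 : ℕ) : ℝ)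
    else 0

/-- `F(z) ∈ ℝ^{r×(r−1)}` with `F_{ii} = −z`, `F_{i+1,i} = 1`, else `0`. -/
def Fm (r : ℕ) (z : ℝ) : Matrix (Fin r) (Fin (r - 1)) ℝ :=
  Matrix.of fun a b =>
    if (a : ℕ) = (b : ℕ) then -z else if (a : ℕ) = (b : ℕ) + 1 then 1 else 0

/-- `F'(z)`, the (constant) derivative of `F(z)`: `−1` on the diagonal, `0` elsewhere. -/
def Fm' (r : ℕ) : Matrix (Fin r) (Fin (r - 1)) ℝ :=
  Matrix.of fun a b => if (a : ℕ) = (b : ℕ) then -1 else 0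

/-- `G(z) ∈ ℝ^{r×r}` with entries `z^{j−i−1}` for `j > i`, else `0`. -/
def Gm (r : ℕ) (z : ℝ) : Matrix (Fin r) (Fin r) ℝ :=
  Matrix.of fun i j => if (i : ℕ) < (j : ℕ) then z ^ ((j : ℕ) - (i : ℕ) - 1) else 0

/-- entrywise `j`-th derivative `G^{(n)}(z)`. -/
def Gd (r n : ℕ) (z : ℝ) : Matrix (Fin r) (Fin r) ℝ :=
  Matrix.of fun i j =>
    iteratedDeriv n (fun t : ℝ => if (i : ℕ) < (j : ℕ) then t ^ ((j : ℕ) - (i : ℕ) - 1) else 0) z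

/-- the row vector `w(z)` with entries `z^b`. -/
def wv (r : ℕ) (z : ℝ) : Fin r → ℝ := fun b => z ^ (b : ℕ)

/-- the `n`-th derivative `w^{(n)}(z)`. -/
def wd (r n : ℕ) (z : ℝ) : Fin r → ℝ := fun b => iteratedDeriv n (fun t : ℝ => t ^ (b : ℕ)) z

/-- the `n`-th derivative `u^{(n)}(z)` of the column vector `u(z)` with entries `z^a`. -/
def ud (q n : ℕ) (z : ℝ) : Fin q → ℝ := fun a => iteratedDeriv n (fun t : ℝ => t ^ (a : ℕ)) z

/-- The matrix `K̄(z)`: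
`[[I_q⊗F(z) + S_q⊗F'(z), −ℓ_q fᵀ ⊗ G(z)], [0, I_{ν−q}⊗I_r − S_{ν−q}⊗G(z)]]`. -/
def Kbar (q r ν : ℕ) (z : ℝ) :
    Matrix (Fin ν × Fin r) ((Fin q × Fin (r - 1)) ⊕ (Fin (ν - q) × Fin r)) ℝ :=
  Matrix.of fun p s =>
    match s with
    | Sum.inl c =>
        (if (p.1 : ℕ) = (c.1 : ℕ) then Fm r z p.2 c.2 else 0) +
        (if (p.1 : ℕ) + 1 = (c.1 : ℕ) then Fm' r p.2 c.2 else 0)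
    | Sum.inr c =>
        (if (p.1 : ℕ) = q + (c.1 : ℕ) then (if p.2 = c.2 then 1 else 0) else 0) +
        (if (p.1 : ℕ) + 1 = q + (c.1 : ℕ) then -(Gm r z p.2 c.2) else 0)

/-- `F_k(z) ∈ ℝ^{(r−k)×(r−1−k)}`. -/
def Fmk (r k : ℕ) (z : ℝ) : Matrix (Fin (r - k)) (Fin (r - (k + 1))) ℝ :=
  Matrix.of fun a b =>
    if (a : ℕ) = (b : ℕ) then -z else if (a : ℕ) = (b : ℕ) + 1 then 1 else 0

/-- `F_k'(z)`, the (constant) derivative of `F_k(z)`. -/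
def Fmk' (r k : ℕ) : Matrix (Fin (r - k)) (Fin (r - (k + 1))) ℝ :=
  Matrix.of fun a b => if (a : ℕ) = (b : ℕ) then -1 else 0

/-- `K_k(z) = I_ν ⊗ F_k(z) + S_ν ⊗ F_k'(z)`. -/
def Kk (ν r k : ℕ) (z : ℝ) :
    Matrix (Fin ν × Fin (r - k)) (Fin ν × Fin (r - (k + 1))) ℝ :=
  (1 : Matrix (Fin ν) (Fin ν) ℝ) ⊗ₖ Fmk r k z + Sh ν ⊗ₖ Fmk' r k

/-- `KP ν r z m = K_0(z) · K_1(z) ⋯ K_{m−1}(z)` (so `KP ν r z μ = 𝒦^{μ−1}(z)`). -/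
def KP (ν r : ℕ) (z : ℝ) : (m : ℕ) → Matrix (Fin ν × Fin r) (Fin ν × Fin (r - m)) ℝ
  | 0 => Matrix.of fun p p' => if p.1 = p'.1 ∧ (p.2 : ℕ) = (p'.2 : ℕ) then 1 else 0
  | m + 1 => KP ν r z m * Kk ν r m z

/-- `𝒜^0 = (A^0, A^1, …, A^{ν−1}) ∈ ℝ^{q×νr}` (at `z = 0`). -/
def A0row (q r ν : ℕ) : Matrix (Fin q) (Fin ν × Fin r) ℝ :=
  Matrix.of fun a p =>
    if (a : ℕ) + (p.2 : ℕ) = (p.1 : ℕ) then (Nat.choose (p.1 : ℕ) (a : ℕ) : ℝ) else 0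

/-- `B^k ∈ ℝ^{r×q}` with entries `(−1)^i·C(q,k+1)` if `i+j = k`, else `0`. -/
def Bk (q r k : ℕ) : Matrix (Fin r) (Fin q) ℝ :=
  Matrix.of fun i j =>
    if (i : ℕ) + (j : ℕ) = k then (-1 : ℝ) ^ (i : ℕ) * (Nat.choose q (k + 1) : ℝ) else 0

/-- `𝓑^0 ∈ ℝ^{νr×q}`, the blocks `B^0, …, B^{ν−1}` stacked vertically. -/
def B0cal (q r ν : ℕ) : Matrix (Fin ν × Fin r) (Fin q) ℝ :=
  Matrix.of fun p j => Bk q r (p.1 : ℕ) p.2 j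

/-- Left multiplication by a fixed matrix, as a linear map. -/
def mulLeftLM {m n p : Type*} [Fintype n] (M : Matrix m n ℝ) :
    Matrix n p ℝ →ₗ[ℝ] Matrix m p ℝ where
  toFun X := M * X
  map_add' X Y := Matrix.mul_add M X Y
  map_smul' c X := by simp [Matrix.mul_smul]

/-- The right inverse `𝓜(z)⁺`. -/
def Mplus (q r μ ν : ℕ) (z : ℝ) : Matrix (Fin ν × Fin r) (Fin μ × Fin q) ℝ :=
  ((1 : Matrix (Fin ν) (Fin ν) ℝ) ⊗ₖ (Wrm r z)⁻¹) * (Lmat ν r 0)⁻¹ *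
    (Abar q r μ ν)ᵀ * (Lmat μ q 0)⁻¹ * ((1 : Matrix (Fin μ) (Fin μ) ℝ) ⊗ₖ (Uq q z)⁻¹)

/-!
Everything reduces, entry by entry, to one property of the Pascal-type matrices `Ũ(z)` and
`W̃(z)`: they carry the anti-diagonal indicator `[x + y = n]` to the matrix with entries
`C(i+j, n) z^{i+j-n}`, by Vandermonde's identity `∑_{x+y=n} C(i,x) C(j,y) = C(i+j, n)`.
At `z = 0` the blocks of `𝓜` and `𝓝` are multiples of such indicators, and so are the
matrices `(i, j) ↦ 𝒜(0)_{(i,a),(j,b)}` obtained by fixing the inner indices; the formula then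
returns exactly the entries at `z`.
-/

lemma Ut_apply (m : ℕ) (z : ℝ) (i j : Fin m) :
    Ut m z i j = ((i : ℕ).choose j : ℝ) * z ^ ((i : ℕ) - j) := by
  rw [Ut, of_apply]
  split_ifs with h
  · rfl
  · rw [Nat.choose_eq_zero_of_lt (not_le.mp h), Nat.cast_zero, zero_mul]

lemma Wt_apply (m : ℕ) (z : ℝ) (i j : Fin m) :
    Wt m z i j = ((j : ℕ).choose i : ℝ) * z ^ ((j : ℕ) - i) := by
  rw [Wt, of_apply]
  split_ifs with h
  · rfl
  · rw [Nat.choose_eq_zero_of_lt (not_le.mp h), Nat.cast_zero, zero_mul]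

lemma sum_range_sum_range_choose_mul_choose {p q c d : ℕ} (hc : c < p) (hd : d < q) (n : ℕ) :
    ∑ x ∈ Finset.range p, ∑ y ∈ Finset.range q,
      (if x + y = n then c.choose x * d.choose y else 0) = (c + d).choose n := by
  rw [← Finset.sum_product', ← Finset.sum_filter, Nat.add_choose_eq]
  apply Finset.sum_subset
  · intro xy hxy
    simpa using (Finset.mem_filter.mp hxy).2
  · rintro ⟨x, y⟩ hxy hxy'
    rw [Finset.HasAntidiagonal.mem_antidiagonal] at hxy
    simp only [Finset.mem_filter, Finset.mem_product, Finset.mem_range, hxy, and_true,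
      not_and_or, not_lt] at hxy'
    rcases hxy' with hx | hy
    · rw [Nat.choose_eq_zero_of_lt (by omega), zero_mul]
    · rw [Nat.choose_eq_zero_of_lt (by omega : d < y), mul_zero]

lemma Ut_mul_mul_Wt_apply_of_antidiagonal {m n : ℕ} (z c : ℝ) (k : ℕ)
    (X : Matrix (Fin m) (Fin n) ℝ) (hX : ∀ x y, X x y = if (x : ℕ) + y = k then c else 0)
    (i : Fin m) (j : Fin n) :
    (Ut m z * X * Wt n z) i j = (((i : ℕ) + j).choose k : ℝ) * c * z ^ ((i : ℕ) + j - k) := by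
  have hterm : ∀ (x : Fin m) (y : Fin n), Ut m z i x * X x y * Wt n z y j =
      ((if (x : ℕ) + y = k then (i : ℕ).choose x * (j : ℕ).choose y else 0 : ℕ) : ℝ) *
        (c * z ^ ((i : ℕ) + j - k)) := by
    intro x y
    rw [Ut_apply, Wt_apply, hX]
    by_cases hk : (x : ℕ) + y = k
    · by_cases hxy : (x : ℕ) ≤ i ∧ (y : ℕ) ≤ j
      · rw [if_pos hk, if_pos hk, show (i : ℕ) + j - k = (i - x) + (j - y) by omega, pow_add]
        push_cast
        ring
      · rcases not_and_or.mp hxy with hx | hy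
        · simp [Nat.choose_eq_zero_of_lt (not_le.mp hx)]
        · simp [Nat.choose_eq_zero_of_lt (not_le.mp hy)]
    · simp [hk]
  simp only [mul_apply, Finset.sum_mul, hterm]
  rw [Finset.sum_comm, ← sum_range_sum_range_choose_mul_choose i.isLt j.isLt k]
  simp only [Finset.sum_range, Nat.cast_sum, ← Finset.sum_mul, mul_assoc]

section Kronecker

variable {R l m n o p : Type*} [CommSemiring R] [Fintype l] [Fintype m] [Fintype n] [Fintype o]

lemma one_kronecker_mul_mul_one_kronecker_apply [DecidableEq l] [DecidableEq n]
    (U : Matrix m m R) (X : Matrix (l × m) (n × o) R) (W : Matrix o p R)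
    (i : l) (a : m) (j : n) (b : p) :
    (((1 : Matrix l l R) ⊗ₖ U) * X * ((1 : Matrix n n R) ⊗ₖ W)) (i, a) (j, b) =
      (U * X.submatrix (Prod.mk i) (Prod.mk j) * W) a b := by
  simp [mul_apply, Fintype.sum_prod_type, one_apply, ite_mul, mul_ite, Finset.sum_mul]

lemma kronecker_one_mul_mul_kronecker_one_apply [DecidableEq m] [DecidableEq o]
    (U : Matrix l l R) (X : Matrix (l × m) (n × o) R) (W : Matrix n p R)
    (i : l) (a : m) (j : p) (b : o) :
    ((U ⊗ₖ (1 : Matrix m m R)) * X * (W ⊗ₖ (1 : Matrix o o R))) (i, a) (j, b) =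
      (U * X.submatrix (·, a) (·, b) * W) i j := by
  simp [mul_apply, Fintype.sum_prod_type, one_apply, ite_mul, mul_ite, Finset.sum_mul]

end Kronecker

lemma Md_apply (q r n : ℕ) (z : ℝ) (a : Fin q) (b : Fin r) :
    Md q r n z a b = (((a : ℕ) + b).descFactorial n : ℝ) * z ^ ((a : ℕ) + b - n) := by
  simp [Md]

lemma Md_zero_apply (q r n : ℕ) (a : Fin q) (b : Fin r) :
    Md q r n 0 a b = if (a : ℕ) + b = n then (n.factorial : ℝ) else 0 := by
  rw [Md, of_apply, iteratedDeriv_fun_pow_zero]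
  by_cases h : (a : ℕ) + b = n
  · subst h
    simp
  · simp [h, Ne.symm h]

lemma Amat_apply (q r k : ℕ) (z : ℝ) (a : Fin q) (b : Fin r) :
    Amat q r k z a b =
      (k.choose ((a : ℕ) + b) : ℝ) * (((a : ℕ) + b).choose a : ℝ) * z ^ (k - ((a : ℕ) + b)) := by
  rw [Amat, of_apply]
  split_ifs with h
  · have hchoose := Nat.choose_mul (n := k) (Nat.le_add_right (a : ℕ) b)
    rw [Nat.add_sub_cancel_left] at hchoose
    rw [Nat.sub_sub, ← Nat.cast_mul, ← Nat.cast_mul, hchoose]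
  · rw [Nat.choose_eq_zero_of_lt (not_le.mp h), Nat.cast_zero, zero_mul, zero_mul]

lemma Amat_zero_apply (q r k : ℕ) (a : Fin q) (b : Fin r) :
    Amat q r k 0 a b = if k = (a : ℕ) + b then (((a : ℕ) + b).choose a : ℝ) else 0 := by
  rw [Amat_apply]
  split_ifs with h
  · simp [h]
  · rcases lt_or_gt_of_ne h with hk | hk
    · simp [Nat.choose_eq_zero_of_lt hk]
    · simp [Nat.sub_ne_zero_of_lt hk]

lemma Acal_eq_kronecker_mul_mul_kronecker (q r μ ν : ℕ) (z : ℝ) :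
    Acal q r μ ν z =
      (Ut μ z ⊗ₖ (1 : Matrix (Fin q) (Fin q) ℝ)) * Acal q r μ ν 0 *
        (Wt ν z ⊗ₖ (1 : Matrix (Fin r) (Fin r) ℝ)) := by
  ext ⟨i, a⟩ ⟨j, b⟩
  rw [kronecker_one_mul_mul_kronecker_one_apply,
    Ut_mul_mul_Wt_apply_of_antidiagonal z (((a : ℕ) + b).choose a) ((a : ℕ) + b) _
      (fun i' j' => by simp only [Acal, submatrix_apply, of_apply, Amat_zero_apply])]
  simp only [Acal, of_apply, Amat_apply]

lemma Mcal_eq_one_kronecker_mul_mul_one_kronecker (q r μ ν : ℕ) (z : ℝ) :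
    Mcal q r μ ν z =
      ((1 : Matrix (Fin μ) (Fin μ) ℝ) ⊗ₖ Ut q z) * Mcal q r μ ν 0 *
        ((1 : Matrix (Fin ν) (Fin ν) ℝ) ⊗ₖ Wt r z) := by
  ext ⟨i, a⟩ ⟨j, b⟩
  rw [one_kronecker_mul_mul_one_kronecker_apply,
    Ut_mul_mul_Wt_apply_of_antidiagonal z ((i : ℕ) + j).factorial ((i : ℕ) + j) _
      (fun a' b' => by simp only [Mcal, submatrix_apply, of_apply, Md_zero_apply])]
  simp only [Mcal, of_apply, Md_apply, Nat.descFactorial_eq_factorial_mul_choose]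
  push_cast
  ring

lemma Ncal_eq_one_kronecker_mul_mul_one_kronecker (q r μ ν : ℕ) (z : ℝ) :
    Ncal q r μ ν z =
      ((1 : Matrix (Fin μ) (Fin μ) ℝ) ⊗ₖ Ut q z) * Ncal q r μ ν 0 *
        ((1 : Matrix (Fin ν) (Fin ν) ℝ) ⊗ₖ Wt r z) := by
  ext ⟨i, a⟩ ⟨j, b⟩
  have hM := congr_fun₂ (Mcal_eq_one_kronecker_mul_mul_one_kronecker q r μ ν z) (i, a) (j, b)
  rw [one_kronecker_mul_mul_one_kronecker_apply] at hM ⊢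
  have hblock : (Ncal q r μ ν 0).submatrix (Prod.mk i) (Prod.mk j) =
      ((i : ℕ).factorial * (j : ℕ).factorial : ℝ)⁻¹ •
        (Mcal q r μ ν 0).submatrix (Prod.mk i) (Prod.mk j) := by
    ext a' b'
    simp [Ncal, Mcal, div_eq_inv_mul]
  rw [hblock, Matrix.mul_smul, Matrix.smul_mul, Matrix.smul_apply, ← hM]
  simp [Ncal, Mcal, div_eq_inv_mul]

theorem statement7_general (q r μ ν : ℕ) :
    ∀ z : ℝ,
      Acal q r μ ν z =
        (Ut μ z ⊗ₖ (1 : Matrix (Fin q) (Fin q) ℝ)) * Acal q r μ ν 0 *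
          (Wt ν z ⊗ₖ (1 : Matrix (Fin r) (Fin r) ℝ)) ∧
      Mcal q r μ ν z =
        ((1 : Matrix (Fin μ) (Fin μ) ℝ) ⊗ₖ Ut q z) * Mcal q r μ ν 0 *
          ((1 : Matrix (Fin ν) (Fin ν) ℝ) ⊗ₖ Wt r z) ∧
      Ncal q r μ ν z =
        ((1 : Matrix (Fin μ) (Fin μ) ℝ) ⊗ₖ Ut q z) * Ncal q r μ ν 0 *
          ((1 : Matrix (Fin ν) (Fin ν) ℝ) ⊗ₖ Wt r z) := fun z =>
  ⟨Acal_eq_kronecker_mul_mul_kronecker q r μ ν z,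
    Mcal_eq_one_kronecker_mul_mul_one_kronecker q r μ ν z,
    Ncal_eq_one_kronecker_mul_mul_one_kronecker q r μ ν z⟩

theorem statement7 (q r μ ν : ℕ) (hq : 0 < q) (hr : 0 < r) (hμ : 0 < μ) (hν : 0 < ν) :
    ∀ z : ℝ,
      Acal q r μ ν z =
        (Ut μ z ⊗ₖ (1 : Matrix (Fin q) (Fin q) ℝ)) * Acal q r μ ν 0 *
          (Wt ν z ⊗ₖ (1 : Matrix (Fin r) (Fin r) ℝ)) ∧
      Mcal q r μ ν z =
        ((1 : Matrix (Fin μ) (Fin μ) ℝ) ⊗ₖ Ut q z) * Mcal q r μ ν 0 *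
          ((1 : Matrix (Fin ν) (Fin ν) ℝ) ⊗ₖ Wt r z) ∧
      Ncal q r μ ν z =
        ((1 : Matrix (Fin μ) (Fin μ) ℝ) ⊗ₖ Ut q z) * Ncal q r μ ν 0 *
          ((1 : Matrix (Fin ν) (Fin ν) ℝ) ⊗ₖ Wt r z) :=
  statement7_general q r μ ν
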